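/- Let K be a field, V = ∏_{i=1}^∞ K (a countably infinite product of copies of K as a K-module), and R = K(+)V the idealization. Then R is a φ-ring, R is a φ-IF ring (every nonnil-injective R-module is φ-flat), and R is not a coherent ring (indeed, for the vector v ∈ V with all components equal to 1, the annihilator (0 :_R (0,v)) = 0(+)V is a non-finitely-generated ideal of R); in particular R is not an IF ring. -/

import Mathlib

open CategoryTheory

universe u

/-- A commutative ring is a `φ`-ring if its nilradical is a divided prime ideal. -/
def IsPhiRing (R : Type u) [CommRing R] : Prop :=
  (nilradical R).IsPrime ∧ ∀ x : R, x ∉ nilradical R → nilradical R ≤ Ideal.span {x}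

/-- A ring is nonnil-coherent if every finitely generated nonnil ideal is
finitely presented as a module. -/
def IsNonnilCoherent (R : Type u) [CommRing R] : Prop :=
  ∀ I : Ideal R, I.FG → ¬ I ≤ nilradical R → Module.FinitePresentation R I

/-- A module is φ-torsion if every element is annihilated by a nonnil ideal. -/
def IsPhiTorsion (R : Type u) [CommRing R] (T : Type u) [AddCommGroup T] [Module R T] : Prop :=
  ∀ t : T, ∃ I : Ideal R, ¬ I ≤ nilradical R ∧ ∀ a ∈ I, a • t = 0

/-- A module `M` is φ-flat if `Tor₁ᴿ(T, M) = 0` for every φ-torsion module `T`. -/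
def IsPhiFlat (R : Type u) [CommRing R] (M : Type u) [AddCommGroup M] [Module R M] : Prop :=
  ∀ (T : Type u) [AddCommGroup T] [Module R T], IsPhiTorsion R T →
    Subsingleton (((Tor (ModuleCat.{u} R) 1).obj (ModuleCat.of R T)).obj (ModuleCat.of R M))

/-- A module `M` is nonnil-injective if `Ext¹ᴿ(T, M) = 0` for every φ-torsion module `T`. -/
def IsNonnilInjective (R : Type u) [CommRing R] (M : Type u) [AddCommGroup M] [Module R M] :
    Prop :=
  ∀ (T : Type u) [AddCommGroup T] [Module R T], IsPhiTorsion R T →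
    Subsingleton (((Ext R (ModuleCat.{u} R) 1).obj (Opposite.op (ModuleCat.of R T))).obj
      (ModuleCat.of R M))

/-- A module `M` is nonnil-FP-injective if `Ext¹ᴿ(T, M) = 0` for every finitely
presented φ-torsion module `T`. -/
def IsNonnilFPInjective (R : Type u) [CommRing R] (M : Type u) [AddCommGroup M] [Module R M] :
    Prop :=
  ∀ (T : Type u) [AddCommGroup T] [Module R T], Module.FinitePresentation R T →
    IsPhiTorsion R T →
    Subsingleton (((Ext R (ModuleCat.{u} R) 1).obj (Opposite.op (ModuleCat.of R T))).obj
      (ModuleCat.of R M))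

/-- A ring is coherent if every finitely generated ideal is finitely presented. -/
def IsCoherentRing (S : Type u) [CommRing S] : Prop :=
  ∀ I : Ideal S, I.FG → Module.FinitePresentation S I

/-! In `R = K(+)V` every element is a unit or nilpotent, so `Nil(R)` is the maximal ideal, `R` is a
φ-ring, and every φ-torsion module is zero, which makes every module φ-flat.

For `g = (0, 1)` the annihilator of `g` is `0(+)V`, which is finitely generated only if `V` is
finite-dimensional over `K`; in a coherent ring the annihilator of an element is finitely
generated, being the kernel of `R → Rg`.

If injective modules were flat, embedding `R/(g)` into an injective module and applying the
equational criterion for flatness to `g · 1 = 0` would give `ann (ann g) ⊆ (g)`. But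
`ann (ann g) = 0(+)V` contains `(0, e₀)`, which is not a multiple of `g`. -/

open CategoryTheory.Limits

lemma CategoryTheory.Functor.isZero_leftDerived_obj_of_isZero_obj {C D : Type*} [Category C]
    [Category D] [Abelian C] [HasProjectiveResolutions C] [Abelian D] (F : C ⥤ D) [F.Additive]
    (hF : ∀ Y, IsZero (F.obj Y)) (n : ℕ) (X : C) : IsZero ((F.leftDerived n).obj X) := by
  let P : ProjectiveResolution X := (HasProjectiveResolution.out (Z := X)).some
  refine IsZero.of_iso ?_ (P.isoLeftDerivedObj F n)
  exact (HomologicalComplex.exactAt_iff_isZero_homology _ _).mp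
    (ShortComplex.exact_of_isZero_X₂ _ (hF _))

section

variable {R : Type u} [CommRing R]

lemma subsingleton_tor_of_subsingleton (T M : Type u) [AddCommGroup T] [Module R T]
    [AddCommGroup M] [Module R M] [Subsingleton T] (n : ℕ) :
    Subsingleton (((Tor (ModuleCat.{u} R) n).obj (ModuleCat.of R T)).obj (ModuleCat.of R M)) :=
  ModuleCat.subsingleton_of_isZero <|
    Functor.isZero_leftDerived_obj_of_isZero_obj _
      (fun _ => ModuleCat.isZero_of_subsingleton (ModuleCat.of R (TensorProduct R T _))) n _

lemma isPhiRing_of_forall_isUnit_or_isNilpotent [Nontrivial R]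
    (h : ∀ x : R, IsUnit x ∨ IsNilpotent x) : IsPhiRing R := by
  refine ⟨⟨fun htop => not_isNilpotent_one (mem_nilradical.mp (htop ▸ Submodule.mem_top)),
    fun {x y} hxy => ?_⟩, fun x hx => ?_⟩
  · simp only [mem_nilradical] at hxy ⊢
    rcases h x with hu | hx
    · exact Or.inr ((hu.isNilpotent_unit_mul_of_commute_iff (Commute.all _ _)).mp hxy)
    · exact Or.inl hx
  · have hu := (h x).resolve_right (mt mem_nilradical.mpr hx)
    rw [Ideal.span_singleton_eq_top.mpr hu]
    exact le_top

lemma IsPhiTorsion.subsingleton (h : ∀ x : R, IsUnit x ∨ IsNilpotent x) {T : Type u}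
    [AddCommGroup T] [Module R T] (hT : IsPhiTorsion R T) : Subsingleton T := by
  refine subsingleton_of_forall_eq 0 fun t => ?_
  obtain ⟨I, hI, hIt⟩ := hT t
  obtain ⟨x, hxI, hx⟩ := SetLike.not_le_iff_exists.mp hI
  have hu := (h x).resolve_right (mt mem_nilradical.mpr hx)
  exact hu.smul_eq_zero.mp (hIt x hxI)

lemma isPhiFlat_of_forall_isUnit_or_isNilpotent (h : ∀ x : R, IsUnit x ∨ IsNilpotent x)
    (M : Type u) [AddCommGroup M] [Module R M] : IsPhiFlat R M := fun T _ _ hT =>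
  have := hT.subsingleton h
  subsingleton_tor_of_subsingleton T M 1

end

lemma IsCoherentRing.fg_colon_bot_span_singleton {S : Type u} [CommRing S] (hS : IsCoherentRing S)
    (a : S) : ((⊥ : Ideal S).colon (Ideal.span {a})).FG := by
  have := hS _ (Submodule.fg_span_singleton a)
  let f := LinearMap.toSpanSingleton S (Ideal.span {a}) ⟨a, Ideal.mem_span_singleton_self a⟩
  have hf : Function.Surjective f := by
    rintro ⟨y, hy⟩
    obtain ⟨r, rfl⟩ := Ideal.mem_span_singleton'.mp hy
    exact ⟨r, rfl⟩
  have hker : LinearMap.ker f = (⊥ : Ideal S).colon (Ideal.span {a}) := by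
    ext r
    simp [f, Subtype.ext_iff]
  exact hker ▸ Module.FinitePresentation.fg_ker f hf

theorem Module.Flat.smul_eq_zero_of_forall_mul_eq_zero {R M : Type*} [CommRing R]
    [AddCommGroup M] [Module R M] [Module.Flat R M] {a b : R} {m : M} (hm : a • m = 0)
    (hab : ∀ c, a * c = 0 → b * c = 0) : b • m = 0 := by
  obtain ⟨k, c, y, hmy, hc⟩ := Module.Flat.isTrivialRelation_of_sum_smul_eq_zero
    (f := fun _ : Unit => a) (x := fun _ => m) (by simpa using hm)
  simp only [Finset.univ_unique, Finset.sum_singleton] at hmy hc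
  rw [hmy (), Finset.smul_sum]
  simp [smul_smul, hab _ (hc _)]

theorem mem_span_singleton_of_forall_injective_flat {R : Type u} [CommRing R]
    (hIF : ∀ (M : Type u) [AddCommGroup M] [Module R M], Module.Injective R M → Module.Flat R M)
    {a b : R} (hab : ∀ c, a * c = 0 → b * c = 0) : b ∈ Ideal.span {a} := by
  let Q := ModuleCat.of R (R ⧸ Ideal.span {a})
  let E : ModuleCat.{u} R := Injective.under Q
  let ι : Q →ₗ[R] E := (Injective.ι Q).hom
  have hι : Function.Injective ι :=
    (ModuleCat.mono_iff_injective (Injective.ι Q)).mp inferInstance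
  have : Injective (ModuleCat.of R E) := Injective.injective_under Q
  have := hIF E (Module.injective_module_of_injective_object R E)
  have hι_mk (r : R) : r • ι (Submodule.Quotient.mk 1) = ι (Submodule.Quotient.mk r) := by
    rw [← map_smul, ← Submodule.Quotient.mk_smul, smul_eq_mul, mul_one]
  have hb := Module.Flat.smul_eq_zero_of_forall_mul_eq_zero (m := ι (Submodule.Quotient.mk 1))
    (by rw [hι_mk, (Submodule.Quotient.mk_eq_zero _).mpr (Ideal.mem_span_singleton_self a),
      map_zero]) hab
  rwa [hι_mk, map_eq_zero_iff ι hι, Submodule.Quotient.mk_eq_zero] at hb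

namespace TrivSqZeroExt

lemma mul_inr {R M : Type*} [Semiring R] [AddCommMonoid M] [Module R M] [Module Rᵐᵒᵖ M]
    (x : TrivSqZeroExt R M) (m : M) : x * inr m = inr (x.fst • m) := by
  ext <;> simp

variable {R M : Type*} [CommSemiring R] [AddCommMonoid M] [Module R M] [Module Rᵐᵒᵖ M]
  [IsCentralScalar R M]

lemma mul_eq_zero_of_mem_kerIdeal {x y : TrivSqZeroExt R M} (hx : x ∈ kerIdeal R M)
    (hy : y ∈ kerIdeal R M) : x * y = 0 := by
  have := Ideal.mul_mem_mul hx hy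
  rwa [← pow_two, kerIdeal_sq, Ideal.mem_bot] at this

lemma inr_mem_span_singleton_inr_iff {m n : M} :
    inr n ∈ Ideal.span {(inr m : TrivSqZeroExt R M)} ↔ n ∈ R ∙ m := by
  simp only [Ideal.mem_span_singleton', Submodule.mem_span_singleton]
  constructor
  · rintro ⟨x, hx⟩
    refine ⟨x.fst, inr_injective (R := R) ?_⟩
    rw [← hx, mul_inr]
  · rintro ⟨r, rfl⟩
    exact ⟨inl r, inl_mul_inr r m⟩

lemma _root_.Module.Finite.of_fg_kerIdeal (h : (kerIdeal R M).FG) : Module.Finite R M := by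
  classical
  obtain ⟨S, hS⟩ := h
  have hsnd : ∀ x ∈ kerIdeal R M,
      x.snd ∈ Submodule.span R (snd '' (S : Set (TrivSqZeroExt R M))) := by
    intro x hx
    rw [← hS] at hx
    induction hx using Submodule.span_induction with
    | mem y hy => exact Submodule.subset_span ⟨y, hy, rfl⟩
    | zero => exact zero_mem _
    | add y z _ _ hy hz => exact add_mem hy hz
    | smul r y hy ih =>
      have hy0 : y ∈ kerIdeal R M := hS ▸ hy
      rw [mem_kerIdeal_iff_inr] at hy0
      rw [hy0, smul_eq_mul, mul_inr, snd_inr]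
      exact Submodule.smul_mem _ _ ih
  refine ⟨⟨S.image snd, eq_top_iff.mpr fun m _ => ?_⟩⟩
  simpa using hsnd (inr m) (by simp [kerIdeal])

lemma colon_bot_span_singleton_inr {K M : Type*} [Field K] [AddCommGroup M] [Module K M]
    [Module Kᵐᵒᵖ M] [IsCentralScalar K M] {m : M} (hm : m ≠ 0) :
    (⊥ : Ideal (TrivSqZeroExt K M)).colon (Ideal.span {inr m} : Ideal (TrivSqZeroExt K M)) =
      kerIdeal K M := by
  ext x
  rw [Submodule.mem_colon_span_singleton, Ideal.mem_bot, smul_eq_mul, mul_inr,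
    ← inr_zero, inr_injective.eq_iff, smul_eq_zero, or_iff_left hm]
  rfl

lemma inr_mul_eq_zero_of_inr_mul_eq_zero {K M : Type*} [Field K] [AddCommGroup M] [Module K M]
    [Module Kᵐᵒᵖ M] [IsCentralScalar K M] {m : M} (hm : m ≠ 0) (n : M)
    (c : TrivSqZeroExt K M) (hc : inr m * c = 0) : inr n * c = 0 := by
  have hcker : c ∈ kerIdeal K M := colon_bot_span_singleton_inr (K := K) hm ▸
    Submodule.mem_colon_span_singleton.mpr (by rwa [smul_eq_mul, Ideal.mem_bot, mul_comm])
  exact mul_eq_zero_of_mem_kerIdeal ((mem_kerIdeal_iff_inr _ _ _).mpr rfl) hcker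

end TrivSqZeroExt

lemma Pi.single_one_notMem_span_one {K ι : Type*} [Semiring K] [Nontrivial K] [DecidableEq ι]
    {i j : ι} (hij : i ≠ j) : Pi.single i (1 : K) ∉ K ∙ (1 : ι → K) := by
  intro h
  obtain ⟨k, hk⟩ := Submodule.mem_span_singleton.mp h
  have hi := congrFun hk i
  have hj := congrFun hk j
  simp only [Pi.smul_apply, Pi.one_apply, smul_eq_mul, mul_one, Pi.single_eq_same,
    Pi.single_eq_of_ne' hij] at hi hj
  exact zero_ne_one (hj.symm.trans hi)

/-- Let `K` be a field, `V = ∏_{i=1}^∞ K` and `R = K(+)V` the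
idealization. Then `R` is a φ-ring and a φ-IF ring; for the all-ones vector `v`, the
annihilator `(0 :_R (0,v))` equals `0(+)V` and is not finitely generated; `R` is not
coherent; and `R` is not an IF ring. -/
theorem idealization_field_product_phiIF_not_IF (K : Type u) [Field K] :
    IsPhiRing (TrivSqZeroExt K (ℕ → K)) ∧
      (∀ (M : Type u) [AddCommGroup M] [Module (TrivSqZeroExt K (ℕ → K)) M],
        IsNonnilInjective (TrivSqZeroExt K (ℕ → K)) M →
          IsPhiFlat (TrivSqZeroExt K (ℕ → K)) M) ∧
      ((Submodule.colon (⊥ : Ideal (TrivSqZeroExt K (ℕ → K)))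
            (Ideal.span {(TrivSqZeroExt.inr (fun _ => 1) : TrivSqZeroExt K (ℕ → K))}) :
          Set (TrivSqZeroExt K (ℕ → K))) =
        {x : TrivSqZeroExt K (ℕ → K) | x.fst = 0} ∧
        ¬ (Submodule.colon (⊥ : Ideal (TrivSqZeroExt K (ℕ → K)))
            (Ideal.span
              {(TrivSqZeroExt.inr (fun _ => 1) : TrivSqZeroExt K (ℕ → K))})).FG) ∧
      ¬ IsCoherentRing (TrivSqZeroExt K (ℕ → K)) ∧
      ¬ (∀ (M : Type u) [AddCommGroup M] [Module (TrivSqZeroExt K (ℕ → K)) M],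
          Module.Injective (TrivSqZeroExt K (ℕ → K)) M →
            Module.Flat (TrivSqZeroExt K (ℕ → K)) M) := by
  have hone : (fun _ : ℕ => (1 : K)) ≠ 0 := Function.ne_iff.mpr ⟨0, one_ne_zero⟩
  have hcolon := TrivSqZeroExt.colon_bot_span_singleton_inr (K := K) hone
  have hnotFG : ¬ (TrivSqZeroExt.kerIdeal K (ℕ → K)).FG := fun h =>
    have := Module.Finite.of_fg_kerIdeal h
    Module.Finite.not_linearIndependent_of_infinite _ (Pi.linearIndependent_single_one ℕ K)
  refine ⟨isPhiRing_of_forall_isUnit_or_isNilpotent TrivSqZeroExt.isUnit_or_isNilpotent,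
    fun M _ _ _ => isPhiFlat_of_forall_isUnit_or_isNilpotent TrivSqZeroExt.isUnit_or_isNilpotent M,
    ⟨by rw [hcolon]; rfl, hcolon ▸ hnotFG⟩,
    fun hcoh => hnotFG (hcolon ▸ hcoh.fg_colon_bot_span_singleton _), fun hIF => ?_⟩
  have hmem := mem_span_singleton_of_forall_injective_flat hIF
    (TrivSqZeroExt.inr_mul_eq_zero_of_inr_mul_eq_zero (K := K) hone (Pi.single 0 1))
  exact Pi.single_one_notMem_span_one zero_ne_one
    (TrivSqZeroExt.inr_mem_span_singleton_inr_iff.mp hmem)
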